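/- For every odd positive integer r and every n with 0 ≤ n ≤ r−1, the rational function f_{r,n} satisfies 𝔉(f_{r,n}) = f_{r,n}; moreover 𝔉(1/X) = 1/X. -/

import Mathlib

/-!
Since `a / (1 - a X) = ∑ₙ aⁿ⁺¹ Xⁿ`, the coefficient of `X^(2k+1)` in `∑ᵢ aᵢ / (1 - aᵢ X)` is
`∑ᵢ (aᵢ²)^(k+1)`, the coefficient of `X^k` in `∑ᵢ aᵢ² / (1 - aᵢ² X)`. For `f_{r,n}` the `aᵢ` are
the `λᵐ` with `m ∈ C_{r,n}`; as `r` is odd, `m ↦ 2m mod r` permutes `C_{r,n}`, so squaring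
permutes the `aᵢ` and the two sums agree. The only nonzero coefficient of `1/X` sits at
`-1 = 2 · (-1) + 1`.
-/

/-- The `n`-th coefficient of the Laurent expansion at `0` of a rational function. -/
noncomputable def coeffL (R : RatFunc ℂ) (n : ℤ) : ℂ :=
  ((R : LaurentSeries ℂ)).coeff n

open scoped Classical in
/-- The rational function `f_{r,n} = ∑_{m ∈ C_{r,n}} λ^m/(1 - λ^m X)`, where
`λ = exp(2πi/r)` and `C_{r,n} = {2^s n mod r : s ∈ ℕ}` is the 2-cyclotomic coset of `n`
modulo `r`. -/
noncomputable def cycFun (r n : ℕ) : RatFunc ℂ :=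
  ∑ m ∈ (Finset.range r).filter (fun m => ∃ s : ℕ, 2 ^ s * n % r = m),
    RatFunc.C (Complex.exp (2 * (Real.pi : ℂ) * Complex.I / r) ^ m) /
      (1 - RatFunc.C (Complex.exp (2 * (Real.pi : ℂ) * Complex.I / r) ^ m) * RatFunc.X)

open Finset

theorem PowerSeries.mk_pow_succ_mul_one_sub_C_mul_X {R : Type*} [CommRing R] (a : R) :
    mk (fun n => a ^ (n + 1)) * (1 - C a * X) = C a := by
  have h := congrArg (rescale a) (mk_one_mul_one_sub_eq_one R)
  simp only [map_mul, map_sub, map_one, rescale_mk, rescale_X, Pi.one_apply, mul_one] at h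
  have hmk : mk (fun n => a ^ (n + 1)) = C a * mk (fun n => a ^ n) := by
    ext n
    simp [pow_succ, mul_comm]
  rw [hmk, mul_assoc, h, mul_one]

theorem RatFunc.coe_C_div_one_sub_C_mul_X {K : Type*} [Field K] (a : K) :
    ((C a / (1 - C a * X) : RatFunc K) : LaurentSeries K) =
      (PowerSeries.mk (fun n => a ^ (n + 1)) : PowerSeries K) := by
  have hC : ((C a : RatFunc K) : LaurentSeries K) = (PowerSeries.C a : PowerSeries K) := by
    rw [← algebraMap_C, ← IsScalarTower.algebraMap_apply, PowerSeries.coe_C]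
    simp
  have hden : ((1 - C a * X : RatFunc K) : LaurentSeries K) =
      ((1 - PowerSeries.C a * PowerSeries.X : PowerSeries K) : LaurentSeries K) := by
    rw [map_sub, map_one, map_mul, hC, coe_X, ← PowerSeries.coe_X]
    push_cast
    rfl
  have hden_ne : ((1 - C a * X : RatFunc K) : LaurentSeries K) ≠ 0 := by
    rw [hden, Ne, ← PowerSeries.coe_zero, HahnSeries.ofPowerSeries_injective.eq_iff]
    intro h
    simpa using congrArg PowerSeries.constantCoeff h
  rw [map_div₀, div_eq_iff hden_ne, hden, hC, ← PowerSeries.coe_mul,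
    PowerSeries.mk_pow_succ_mul_one_sub_C_mul_X]

theorem coeffL_injective : Function.Injective coeffL := fun _ _ h =>
  RingHom.injective _ (HahnSeries.coeff_injective h)

theorem coeffL_sum_C_div_one_sub_C_mul_X {ι : Type*} (s : Finset ι) (a : ι → ℂ) (k : ℤ) :
    coeffL (∑ i ∈ s, RatFunc.C (a i) / (1 - RatFunc.C (a i) * RatFunc.X)) k =
      if k < 0 then 0 else ∑ i ∈ s, a i ^ (k.natAbs + 1) := by
  simp only [coeffL, map_sum, HahnSeries.coeff_sum, RatFunc.coe_C_div_one_sub_C_mul_X,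
    PowerSeries.coeff_coe, PowerSeries.coeff_mk]
  split_ifs <;> simp

theorem coeffL_sum_C_div_one_sub_C_mul_X_odd {ι : Type*} {s : Finset ι} {a : ι → ℂ}
    {σ : ι → ι} (hσ : Set.BijOn σ s s) (ha : ∀ i ∈ s, a (σ i) = a i ^ 2) (k : ℤ) :
    coeffL (∑ i ∈ s, RatFunc.C (a i) / (1 - RatFunc.C (a i) * RatFunc.X)) (2 * k + 1) =
      coeffL (∑ i ∈ s, RatFunc.C (a i) / (1 - RatFunc.C (a i) * RatFunc.X)) k := by
  rw [coeffL_sum_C_div_one_sub_C_mul_X, coeffL_sum_C_div_one_sub_C_mul_X]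
  rcases lt_or_ge k 0 with hk | hk
  · rw [if_pos hk, if_pos (by omega)]
  rw [if_neg (by omega), if_neg (by omega)]
  have hexp : (2 * k + 1).natAbs + 1 = 2 * (k.natAbs + 1) := by omega
  calc ∑ i ∈ s, a i ^ ((2 * k + 1).natAbs + 1) = ∑ i ∈ s, a (σ i) ^ (k.natAbs + 1) :=
        sum_congr rfl fun i hi => by rw [hexp, pow_mul, ha i hi]
    _ = ∑ i ∈ s, a i ^ (k.natAbs + 1) :=
        sum_nbij σ hσ.mapsTo hσ.injOn hσ.surjOn fun _ _ => rfl

theorem coeffL_inv_X (k : ℤ) : coeffL RatFunc.X⁻¹ k = if k = -1 then 1 else 0 := by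
  have hX : ((RatFunc.X⁻¹ : RatFunc ℂ) : LaurentSeries ℂ) = HahnSeries.single (-1) 1 := by
    rw [map_inv₀, RatFunc.coe_X, HahnSeries.inv_single, inv_one]
  simp [coeffL, hX, HahnSeries.coeff_single]

open scoped Classical in
noncomputable def cyclotomicCoset (q r n : ℕ) : Finset ℕ :=
  (range r).filter (fun m => ∃ s : ℕ, q ^ s * n % r = m)

theorem mapsTo_mul_mod_cyclotomicCoset (q r n : ℕ) :
    Set.MapsTo (fun m => q * m % r) (cyclotomicCoset q r n) (cyclotomicCoset q r n) := by
  intro m hm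
  simp only [cyclotomicCoset, coe_filter, mem_range, Set.mem_ofPred_eq] at hm ⊢
  obtain ⟨hmr, s, rfl⟩ := hm
  exact ⟨Nat.mod_lt _ (by omega), s + 1, by rw [Nat.mul_mod_mod, pow_succ', mul_assoc]⟩

theorem injOn_mul_mod {q r : ℕ} (hq : q.Coprime r) : Set.InjOn (fun m => q * m % r) (range r) := by
  intro a ha b hb hab
  simp only [coe_range, Set.mem_Iio] at ha hb
  exact (Nat.ModEq.cancel_left_of_coprime (Nat.coprime_comm.mp hq) hab).eq_of_lt_of_lt ha hb

open scoped Classical in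
theorem bijOn_mul_mod_cyclotomicCoset {q r : ℕ} (hq : q.Coprime r) (n : ℕ) :
    Set.BijOn (fun m => q * m % r) (cyclotomicCoset q r n) (cyclotomicCoset q r n) :=
  (finite_toSet _).injOn_iff_bijOn_of_mapsTo (mapsTo_mul_mod_cyclotomicCoset q r n) |>.mp
    ((injOn_mul_mod hq).mono (coe_subset.mpr (filter_subset _ _)))

theorem cycFun_eq_sum_cyclotomicCoset (r n : ℕ) : cycFun r n = ∑ m ∈ cyclotomicCoset 2 r n,
    RatFunc.C (Complex.exp (2 * Real.pi * Complex.I / r) ^ m) /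
      (1 - RatFunc.C (Complex.exp (2 * Real.pi * Complex.I / r) ^ m) * RatFunc.X) := rfl

theorem coeffL_cycFun_odd {r : ℕ} (hr : Odd r) (n : ℕ) (k : ℤ) :
    coeffL (cycFun r n) (2 * k + 1) = coeffL (cycFun r n) k := by
  have hζ := Complex.isPrimitiveRoot_exp r (by rintro rfl; simp at hr)
  rw [cycFun_eq_sum_cyclotomicCoset]
  set ζ := Complex.exp (2 * Real.pi * Complex.I / r)
  refine coeffL_sum_C_div_one_sub_C_mul_X_odd
    (bijOn_mul_mod_cyclotomicCoset (Nat.coprime_two_left.mpr hr) n) (fun m _ => ?_) k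
  rw [← pow_mul, mul_comm m, hζ.eq_orderOf, pow_mod_orderOf]

/-- Each `f_{r,n}` (for `r` odd positive, `0 ≤ n ≤ r-1`) is fixed by `𝔉`, and `1/X` is
fixed by `𝔉`. -/
theorem stmt_15 (F : RatFunc ℂ → RatFunc ℂ)
    (hF : ∀ R : RatFunc ℂ, ∀ k : ℤ, coeffL (F R) k = coeffL R (2 * k + 1)) :
    (∀ r n : ℕ, Odd r → 0 < r → n ≤ r - 1 → F (cycFun r n) = cycFun r n) ∧
    F RatFunc.X⁻¹ = RatFunc.X⁻¹ := by
  have fixed_of_coeffL_odd (R : RatFunc ℂ) (hR : ∀ k, coeffL R (2 * k + 1) = coeffL R k) :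
      F R = R :=
    coeffL_injective (funext fun k => (hF R k).trans (hR k))
  refine ⟨fun r n hr _ _ => fixed_of_coeffL_odd _ (coeffL_cycFun_odd hr n),
    fixed_of_coeffL_odd _ fun k => ?_⟩
  simp only [coeffL_inv_X, show 2 * k + 1 = -1 ↔ k = -1 by omega]
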